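/- Let φ : ℝ → ℝ≥0 be log-concave with positive finite integral. Then its symmetric decreasing rearrangement φ* is also log-concave. -/

import Mathlib

open MeasureTheory

/-- A function `φ : ℝ → ℝ≥0` is log-concave. -/
def IsLogConcave (φ : ℝ → ℝ) : Prop :=
  ∀ x y t : ℝ, t ∈ Set.Ioo (0:ℝ) 1 → φ x ^ (1 - t) * φ y ^ t ≤ φ ((1 - t) * x + t * y)

/-- The symmetric decreasing rearrangement of `φ`. -/
noncomputable def symmRearrange (φ : ℝ → ℝ) : ℝ → ℝ :=
  fun t => sInf {α : ℝ | volume {x | α ≤ φ x} ≤ ENNReal.ofReal (2 * |t|)}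

namespace RearrangeAux

variable {φ : ℝ → ℝ}

lemma mem_pos (hφ0 : ∀ x, 0 ≤ φ x) {t α : ℝ}
    (h : volume {x | α ≤ φ x} ≤ ENNReal.ofReal (2 * |t|)) : 0 < α := by
  by_contra hα
  push_neg at hα
  have he : {x | α ≤ φ x} = Set.univ := Set.eq_univ_of_forall fun x => le_trans hα (hφ0 x)
  rw [he, Real.volume_univ] at h
  exact ENNReal.ofReal_ne_top (top_le_iff.mp h)


lemma superlevel_seg (hφ0 : ∀ x, 0 ≤ φ x) (hφ : IsLogConcave φ) {γ a1 a2 p : ℝ}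
    (hγ : 0 < γ) (h1 : γ ≤ φ a1) (h2 : γ ≤ φ a2) (hp : p ∈ Set.Icc a1 a2) : γ ≤ φ p := by
  obtain ⟨hpa, hpb⟩ := hp
  rcases eq_or_lt_of_le hpa with h | hlt1
  · rwa [← h]
  rcases eq_or_lt_of_le hpb with h | hlt2
  · rwa [h]
  have ha12 : a1 < a2 := lt_trans hlt1 hlt2
  set s : ℝ := (p - a1) / (a2 - a1) with hs
  have hs0 : 0 < s := div_pos (by linarith) (by linarith)
  have hs1 : s < 1 := (div_lt_one (by linarith)).mpr (by linarith)
  have key := hφ a1 a2 s ⟨hs0, hs1⟩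
  have heq : (1 - s) * a1 + s * a2 = p := by
    rw [hs]
    have hne : a2 - a1 ≠ 0 := by linarith
    field_simp
    ring
  rw [heq] at key
  refine le_trans ?_ key
  calc γ = γ ^ ((1 - s) + s) := by norm_num
    _ = γ ^ (1 - s) * γ ^ s := Real.rpow_add hγ _ _
    _ ≤ φ a1 ^ (1 - s) * φ a2 ^ s := by
        apply mul_le_mul (Real.rpow_le_rpow hγ.le h1 (by linarith))
          (Real.rpow_le_rpow hγ.le h2 hs0.le) (Real.rpow_nonneg hγ.le _)
          (Real.rpow_nonneg (hφ0 a1) _)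


lemma exists_gap {A : Set ℝ} {r : ℝ} (hr : 0 ≤ r) (h : ENNReal.ofReal r < volume A) :
    ∃ a ∈ A, ∃ b ∈ A, r < b - a := by
  have hne : A.Nonempty := by
    apply MeasureTheory.nonempty_of_measure_ne_zero (μ := volume)
    intro h0
    rw [h0] at h
    simp at h
  obtain ⟨a₀, ha₀⟩ := hne
  by_contra hc
  push_neg at hc
  have hbdd : BddAbove A := ⟨a₀ + r, fun b hb => by have := hc a₀ ha₀ b hb; linarith⟩
  have hbdd' : BddBelow A := ⟨a₀ - r, fun a ha => by have := hc a ha a₀ ha₀; linarith⟩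
  have hsub : A ⊆ Set.Icc (sInf A) (sSup A) := fun a ha => ⟨csInf_le hbdd' ha, le_csSup hbdd ha⟩
  have hsup : sSup A ≤ sInf A + r := by
    apply csSup_le ⟨a₀, ha₀⟩
    intro b hb
    have : b - r ≤ sInf A := le_csInf ⟨a₀, ha₀⟩ (fun a ha => by have := hc a ha b hb; linarith)
    linarith
  have : volume A ≤ ENNReal.ofReal r := by
    calc volume A ≤ volume (Set.Icc (sInf A) (sSup A)) := measure_mono hsub
      _ = ENNReal.ofReal (sSup A - sInf A) := Real.volume_Icc
      _ ≤ ENNReal.ofReal r := ENNReal.ofReal_le_ofReal (by linarith)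
  exact absurd this (not_le.mpr h)


lemma exists_bound (hφ0 : ∀ x, 0 ≤ φ x) (hφ : IsLogConcave φ) (hmeas : Measurable φ)
    (hint : Integrable φ) (hpos : 0 < ∫ x, φ x) : ∃ C : ℝ, ∀ w, φ w < C := by
  set I := ∫ x, φ x with hIdef
  have hI : ∫⁻ x, ENNReal.ofReal (φ x) = ENNReal.ofReal I :=
    (MeasureTheory.ofReal_integral_eq_lintegral_ofReal hint (Filter.Eventually.of_forall hφ0)).symm
  have hmeas' : AEMeasurable (fun x => ENNReal.ofReal (φ x)) volume :=
    (ENNReal.measurable_ofReal.comp hmeas).aemeasurable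
  have markov : ∀ c : ℝ, 0 ≤ c →
      ENNReal.ofReal c * volume {x | c ≤ φ x} ≤ ENNReal.ofReal I := by
    intro c hc
    have hset : {x | ENNReal.ofReal c ≤ ENNReal.ofReal (φ x)} = {x | c ≤ φ x} := by
      ext x
      simp [ENNReal.ofReal_le_ofReal_iff (hφ0 x)]
    have := MeasureTheory.mul_meas_ge_le_lintegral₀ hmeas' (ENNReal.ofReal c)
    rw [hset, hI] at this
    exact this
  -- step B : positive level with positive measure
  have hB : ∃ m : ℝ, 0 < m ∧ volume {x | m ≤ φ x} ≠ 0 := by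
    by_contra hb
    push_neg at hb
    have hnull : volume {x | φ x ≠ 0} = 0 := by
      have hsub : {x | φ x ≠ 0} ⊆ ⋃ n : ℕ, {x | 1/(n+1 : ℝ) ≤ φ x} := by
        intro x hx
        have hx' : 0 < φ x := lt_of_le_of_ne (hφ0 x) (Ne.symm hx)
        obtain ⟨n, hn⟩ := exists_nat_gt (1 / φ x)
        refine Set.mem_iUnion.mpr ⟨n, ?_⟩
        have h1 : 1 < φ x * n := by
          have := (div_lt_iff₀ hx').mp hn
          linarith
        show 1/(n+1 : ℝ) ≤ φ x
        rw [div_le_iff₀ (by positivity)]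
        nlinarith
      refine measure_mono_null hsub (measure_iUnion_null fun n => ?_)
      exact hb (1/(n+1 : ℝ)) (by positivity)
    have hzero : I = 0 := by
      rw [hIdef]
      apply MeasureTheory.integral_eq_zero_of_ae
      exact (MeasureTheory.ae_iff).mpr (by simpa using hnull)
    linarith
  obtain ⟨m, hm, hmne⟩ := hB
  set B := {x | m ≤ φ x} with hBdef
  have hfin : volume B ≠ ⊤ := by
    intro htop
    have := markov m hm.le
    rw [htop, ENNReal.mul_top (by simpa using hm)] at this
    exact ENNReal.ofReal_ne_top (top_le_iff.mp this)
  set δ := (volume B).toReal with hδ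
  have hδpos : 0 < δ := ENNReal.toReal_pos hmne hfin
  have hgap : ∃ a ∈ B, ∃ b ∈ B, δ/2 < b - a := by
    apply exists_gap (by linarith)
    rw [← ENNReal.ofReal_toReal hfin, ← hδ]
    exact (ENNReal.ofReal_lt_ofReal_iff hδpos).mpr (by linarith)
  obtain ⟨a1, ha1, a2, ha2, hgap⟩ := hgap
  set K := I / ((δ/4) * m ^ ((1:ℝ)/2)) with hK
  have hmhalf : 0 < m ^ ((1:ℝ)/2) := Real.rpow_pos_of_pos hm _
  refine ⟨K^2 + 1, fun w => ?_⟩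
  set c := m ^ ((1:ℝ)/2) * φ w ^ ((1:ℝ)/2) with hc
  have hc0 : 0 ≤ c := mul_nonneg hmhalf.le (Real.rpow_nonneg (hφ0 w) _)
  have hsub : Set.Icc ((a1+w)/2) ((a2+w)/2) ⊆ {x | c ≤ φ x} := by
    intro p hp
    obtain ⟨hp1, hp2⟩ := hp
    have hx : (2*p - w) ∈ Set.Icc a1 a2 := ⟨by linarith, by linarith⟩
    have hφx : m ≤ φ (2*p - w) := superlevel_seg hφ0 hφ hm ha1 ha2 hx
    have key := hφ (2*p - w) w (1/2) ⟨by norm_num, by norm_num⟩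
    have heq : (1 - 1/2 : ℝ) * (2*p - w) + (1/2) * w = p := by ring
    rw [heq] at key
    show c ≤ φ p
    refine le_trans ?_ key
    have h12 : (1 - 1/2 : ℝ) = 1/2 := by norm_num
    rw [h12]
    exact mul_le_mul (Real.rpow_le_rpow hm.le hφx (by norm_num)) le_rfl
      (Real.rpow_nonneg (hφ0 w) _) (Real.rpow_nonneg (le_trans hm.le hφx) _)
  have hvol : ENNReal.ofReal (δ/4) ≤ volume {x | c ≤ φ x} := by
    calc ENNReal.ofReal (δ/4) ≤ ENNReal.ofReal ((a2+w)/2 - (a1+w)/2) :=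
          ENNReal.ofReal_le_ofReal (by linarith)
      _ = volume (Set.Icc ((a1+w)/2) ((a2+w)/2)) := Real.volume_Icc.symm
      _ ≤ volume {x | c ≤ φ x} := measure_mono hsub
  have hchain : ENNReal.ofReal (c * (δ/4)) ≤ ENNReal.ofReal I := by
    rw [ENNReal.ofReal_mul hc0]
    calc ENNReal.ofReal c * ENNReal.ofReal (δ/4)
        ≤ ENNReal.ofReal c * volume {x | c ≤ φ x} :=
          mul_le_mul_right hvol _
      _ ≤ ENNReal.ofReal I := markov c hc0
  have hreal : c * (δ/4) ≤ I := (ENNReal.ofReal_le_ofReal_iff hpos.le).mp hchain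
  have hhalf : φ w ^ ((1:ℝ)/2) ≤ K := by
    rw [hK, le_div_iff₀ (by positivity)]
    nlinarith
  have hsq : (φ w ^ ((1:ℝ)/2)) ^ (2:ℕ) = φ w := by
    rw [← Real.rpow_natCast (φ w ^ ((1:ℝ)/2)) 2, ← Real.rpow_mul (hφ0 w)]
    norm_num
  have h0 : 0 ≤ φ w ^ ((1:ℝ)/2) := Real.rpow_nonneg (hφ0 w) _
  nlinarith [hsq, hhalf, h0]


end RearrangeAux

set_option maxHeartbeats 1000000 in
theorem rearrangement_log_concave (φ : ℝ → ℝ) (hφ0 : ∀ x, 0 ≤ φ x)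
    (hφ : IsLogConcave φ) (hmeas : Measurable φ) (hint : Integrable φ)
    (hpos : 0 < ∫ x, φ x) :
    IsLogConcave (symmRearrange φ) := by
  obtain ⟨C, hC⟩ := RearrangeAux.exists_bound hφ0 hφ hmeas hint hpos
  intro x y t ht
  obtain ⟨ht0, ht1⟩ := ht
  set z := (1 - t) * x + t * y with hz
  have hSz_ne : ∀ u : ℝ,
      {α : ℝ | volume {x' | α ≤ φ x'} ≤ ENNReal.ofReal (2 * |u|)}.Nonempty := by
    intro u
    refine ⟨C, ?_⟩
    have hempty : {x' | C ≤ φ x'} = ∅ :=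
      Set.eq_empty_of_forall_notMem fun w hw => absurd hw (not_le.mpr (hC w))
    simp [Set.mem_setOf_eq, hempty]
  have hbdd : ∀ u : ℝ,
      BddBelow {α : ℝ | volume {x' | α ≤ φ x'} ≤ ENNReal.ofReal (2 * |u|)} :=
    fun u => ⟨0, fun α hα => (RearrangeAux.mem_pos hφ0 hα).le⟩
  have hnn : ∀ u : ℝ, 0 ≤ symmRearrange φ u := fun u =>
    Real.sInf_nonneg fun α hα => (RearrangeAux.mem_pos hφ0 hα).le
  rcases eq_or_lt_of_le (hnn x) with hpx | hpx
  · rw [← hpx, Real.zero_rpow (by intro h; rw [sub_eq_zero] at h; linarith), zero_mul]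
    exact hnn z
  rcases eq_or_lt_of_le (hnn y) with hpy | hpy
  · rw [← hpy, Real.zero_rpow (ne_of_gt ht0), mul_zero]
    exact hnn z
  set px := symmRearrange φ x with hpxdef
  set py := symmRearrange φ y with hpydef
  set c := px ^ (1 - t) * py ^ t with hc
  have hcpos : 0 < c := mul_pos (Real.rpow_pos_of_pos hpx _) (Real.rpow_pos_of_pos hpy _)
  show c ≤ symmRearrange φ z
  apply le_csInf (hSz_ne z)
  intro α hα
  by_contra hlt
  push_neg at hlt
  have hα0 : 0 < α := RearrangeAux.mem_pos hφ0 hα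
  set α' := (α + c)/2 with hα'
  set s := α'/c with hs
  have hs0 : 0 < s := div_pos (by positivity) hcpos
  have hs1 : s < 1 := (div_lt_one hcpos).mpr (by rw [hα']; linarith)
  set αx := s * px with hαxdef
  set αy := s * py with hαydef
  have hαx : 0 < αx := mul_pos hs0 hpx
  have hαy : 0 < αy := mul_pos hs0 hpy
  have hfact : αx ^ (1 - t) * αy ^ t = α' := by
    rw [hαxdef, hαydef, Real.mul_rpow hs0.le hpx.le, Real.mul_rpow hs0.le hpy.le]
    have h1 : s ^ (1-t) * px ^ (1-t) * (s ^ t * py ^ t) = (s ^ ((1-t) + t)) * c := by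
      rw [Real.rpow_add hs0, hc]; ring
    rw [h1]
    norm_num
    rw [hs]
    field_simp
  have hxnot : ENNReal.ofReal (2*|x|) < volume {x' | αx ≤ φ x'} := by
    by_contra hmem
    push_neg at hmem
    have hle : px ≤ αx := csInf_le (hbdd x) hmem
    nlinarith
  have hynot : ENNReal.ofReal (2*|y|) < volume {x' | αy ≤ φ x'} := by
    by_contra hmem
    push_neg at hmem
    have hle : py ≤ αy := csInf_le (hbdd y) hmem
    nlinarith
  obtain ⟨a1, ha1, a2, ha2, hgapx⟩ := RearrangeAux.exists_gap (by positivity) hxnot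
  obtain ⟨b1, hb1, b2, hb2, hgapy⟩ := RearrangeAux.exists_gap (by positivity) hynot
  set L := (1-t)*a1 + t*b1 with hL
  set R := (1-t)*a2 + t*b2 with hR
  have habs : 2*|z| ≤ (1-t)*(2*|x|) + t*(2*|y|) := by
    rw [hz]
    have h := abs_add_le ((1-t)*x) (t*y)
    rw [abs_mul, abs_mul, abs_of_pos ht0, abs_of_pos (by linarith : (0:ℝ) < 1 - t)] at h
    linarith
  have hRL : 2*|z| < R - L := by
    have h1 : (1-t)*(2*|x|) < (1-t)*(a2 - a1) := by nlinarith
    have h2 : t*(2*|y|) < t*(b2 - b1) := by nlinarith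
    have h3 : R - L = (1-t)*(a2-a1) + t*(b2-b1) := by rw [hR, hL]; ring
    linarith
  have hRLpos : 0 < R - L := by have := abs_nonneg z; linarith
  have hsub : Set.Icc L R ⊆ {x' | α ≤ φ x'} := by
    intro p hp
    obtain ⟨hp1, hp2⟩ := hp
    set u := (p - L)/(R - L) with hu
    have hu0 : 0 ≤ u := div_nonneg (by linarith) hRLpos.le
    have hu1 : u ≤ 1 := (div_le_one hRLpos).mpr (by linarith)
    set a := a1 + u*(a2 - a1) with ha
    set b := b1 + u*(b2 - b1) with hb
    have hax : 0 ≤ a2 - a1 := by have := abs_nonneg x; linarith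
    have hbx : 0 ≤ b2 - b1 := by have := abs_nonneg y; linarith
    have haI : a ∈ Set.Icc a1 a2 :=
      ⟨by nlinarith [mul_nonneg hu0 hax], by nlinarith [mul_nonneg (sub_nonneg.mpr hu1) hax]⟩
    have hbI : b ∈ Set.Icc b1 b2 :=
      ⟨by nlinarith [mul_nonneg hu0 hbx], by nlinarith [mul_nonneg (sub_nonneg.mpr hu1) hbx]⟩
    have hφa : αx ≤ φ a := RearrangeAux.superlevel_seg hφ0 hφ hαx ha1 ha2 haI
    have hφb : αy ≤ φ b := RearrangeAux.superlevel_seg hφ0 hφ hαy hb1 hb2 hbI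
    have key := hφ a b t ⟨ht0, ht1⟩
    have heq : (1-t)*a + t*b = p := by
      have h4 : (1-t)*a + t*b = L + u*(R - L) := by rw [ha, hb, hL, hR]; ring
      rw [h4, hu]
      field_simp
      ring
    rw [heq] at key
    show α ≤ φ p
    have hmid : α' ≤ φ a ^ (1-t) * φ b ^ t := by
      rw [← hfact]
      exact mul_le_mul (Real.rpow_le_rpow hαx.le hφa (by linarith))
        (Real.rpow_le_rpow hαy.le hφb ht0.le) (Real.rpow_nonneg hαy.le _)
        (Real.rpow_nonneg (le_trans hαx.le hφa) _)
    have hαα' : α ≤ α' := by rw [hα']; linarith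
    linarith
  have hfinal : ENNReal.ofReal (2*|z|) < volume {x' | α ≤ φ x'} := by
    calc ENNReal.ofReal (2*|z|) < ENNReal.ofReal (R - L) :=
        (ENNReal.ofReal_lt_ofReal_iff hRLpos).mpr hRL
      _ = volume (Set.Icc L R) := Real.volume_Icc.symm
      _ ≤ volume {x' | α ≤ φ x'} := measure_mono hsub
  exact absurd hα (not_le.mpr hfinal)
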